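/- arXiv:2512.04297 — 3 statements merged into one kernel-verified Lean document; each statement's English description precedes it below -/
import Mathlib

section
/- Let A be a 4×4 real matrix of the block form A = [[B, 0],[0, C]] with B = [[y₃, y₂],[y₄, -y₁]] and C = [[y₃, -y₄],[-y₂, -y₁]] for real numbers y₁, y₂, y₃, y₄. Then ‖A‖_Fr² ≥ 2‖A‖_op², i.e., tr(AᵀA) ≥ 2‖A‖_op². -/
/-!
Both blocks have the same squared Frobenius norm `s = y₁² + y₂² + y₃² + y₄²`, so `tr(AᵀA) = 2s`.
Row-wise Cauchy–Schwarz gives `‖Mx‖² ≤ ‖M‖_Fr² ‖x‖²` on each block, and since `A` acts on the two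
halves of `x` separately, `‖A‖_op² ≤ max(‖B‖_Fr², ‖C‖_Fr²) = s`.
-/

open Matrix

/-- Squared Frobenius norm of a real matrix: `tr(Aᵀ A)`. -/
noncomputable def frobSq {n m : Type*} [Fintype n] [Fintype m] (A : Matrix n m ℝ) : ℝ :=
  (Aᵀ * A).trace

/-- Operator norm of a real matrix acting between Euclidean spaces. -/
noncomputable def opN {n m : Type*} [Fintype n] [Fintype m] [DecidableEq m]
    (A : Matrix n m ℝ) : ℝ :=
  ‖LinearMap.toContinuousLinearMap (Matrix.toEuclideanLin A)‖

section

variable {ι κ ι' κ' : Type*} [Fintype ι] [Fintype κ] [Fintype ι'] [Fintype κ']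

theorem frobSq_eq_sum_sq (A : Matrix ι κ ℝ) : frobSq A = ∑ i, ∑ j, A i j ^ 2 := by
  simp only [frobSq, trace, diag, mul_apply, transpose_apply, ← sq]
  exact Finset.sum_comm

theorem sum_mulVec_sq_le_frobSq_mul (A : Matrix ι κ ℝ) (x : κ → ℝ) :
    ∑ i, (A *ᵥ x) i ^ 2 ≤ frobSq A * ∑ j, x j ^ 2 := by
  rw [frobSq_eq_sum_sq, Finset.sum_mul]
  exact Finset.sum_le_sum fun i _ => Finset.sum_mul_sq_le_sq_mul_sq _ _ _

theorem opN_sq_le_of_sum_mulVec_sq_le [DecidableEq κ] (A : Matrix ι κ ℝ) {c : ℝ} (hc : 0 ≤ c)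
    (h : ∀ x : κ → ℝ, ∑ i, (A *ᵥ x) i ^ 2 ≤ c * ∑ j, x j ^ 2) : opN A ^ 2 ≤ c := by
  have hle : opN A ≤ √c := by
    refine ContinuousLinearMap.opNorm_le_bound _ (Real.sqrt_nonneg c) fun x => ?_
    rw [← sq_le_sq₀ (norm_nonneg _) (by positivity), mul_pow, Real.sq_sqrt hc,
      EuclideanSpace.real_norm_sq_eq, EuclideanSpace.real_norm_sq_eq]
    exact h x
  calc opN A ^ 2 ≤ √c ^ 2 := pow_le_pow_left₀ (norm_nonneg _) hle 2
    _ = c := Real.sq_sqrt hc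

theorem frobSq_fromBlocks_zero (B : Matrix ι κ ℝ) (C : Matrix ι' κ' ℝ) :
    frobSq (fromBlocks B 0 0 C) = frobSq B + frobSq C := by
  simp [frobSq_eq_sum_sq, Fintype.sum_sum_type]

theorem opN_fromBlocks_zero_sq_le_max [DecidableEq κ] [DecidableEq κ']
    (B : Matrix ι κ ℝ) (C : Matrix ι' κ' ℝ) :
    opN (fromBlocks B 0 0 C) ^ 2 ≤ max (frobSq B) (frobSq C) := by
  have hB : 0 ≤ frobSq B := by rw [frobSq_eq_sum_sq]; positivity
  refine opN_sq_le_of_sum_mulVec_sq_le _ (hB.trans (le_max_left _ _)) fun x => ?_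
  set M := max (frobSq B) (frobSq C)
  calc ∑ i, (fromBlocks B 0 0 C *ᵥ x) i ^ 2
      = ∑ i, (B *ᵥ (x ∘ Sum.inl)) i ^ 2 + ∑ i, (C *ᵥ (x ∘ Sum.inr)) i ^ 2 := by
        simp [fromBlocks_mulVec, Fintype.sum_sum_type]
    _ ≤ frobSq B * ∑ j, (x ∘ Sum.inl) j ^ 2 + frobSq C * ∑ j, (x ∘ Sum.inr) j ^ 2 :=
        add_le_add (sum_mulVec_sq_le_frobSq_mul B _) (sum_mulVec_sq_le_frobSq_mul C _)
    _ ≤ M * ∑ j, (x ∘ Sum.inl) j ^ 2 + M * ∑ j, (x ∘ Sum.inr) j ^ 2 := by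
        gcongr
        exacts [le_max_left _ _, le_max_right _ _]
    _ = M * ∑ j, x j ^ 2 := by rw [Fintype.sum_sum_type, mul_add]; rfl

theorem two_mul_opN_fromBlocks_zero_sq_le_frobSq [DecidableEq κ] [DecidableEq κ']
    (B : Matrix ι κ ℝ) (C : Matrix ι' κ' ℝ) (h : frobSq B = frobSq C) :
    2 * opN (fromBlocks B 0 0 C) ^ 2 ≤ frobSq (fromBlocks B 0 0 C) := by
  have hop := opN_fromBlocks_zero_sq_le_max B C
  rw [h, max_self] at hop
  rw [frobSq_fromBlocks_zero, h]
  linarith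

end

/-- For the 4×4 block-diagonal matrix `A = diag(B, C)` with `B = [[y₃,y₂],[y₄,-y₁]]`
and `C = [[y₃,-y₄],[-y₂,-y₁]]`, we have `tr(AᵀA) = ‖A‖_Fr² ≥ 2‖A‖_op²`. -/
theorem stmt2 (y₁ y₂ y₃ y₄ : ℝ) :
    2 * opN (Matrix.fromBlocks !![y₃, y₂; y₄, -y₁] 0 0 !![y₃, -y₄; -y₂, -y₁]) ^ 2 ≤
      frobSq (Matrix.fromBlocks !![y₃, y₂; y₄, -y₁] 0 0 !![y₃, -y₄; -y₂, -y₁]) := by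
  refine two_mul_opN_fromBlocks_zero_sq_le_frobSq _ _ ?_
  simp only [frobSq_eq_sum_sq, Fin.sum_univ_two, of_apply, cons_val', cons_val_zero,
    cons_val_one, empty_val', cons_val_fin_one]
  ring
end

section
/- Abstract mixing rate propagation, case 0 < s < s₀: let (T_t)_{t≥0} be linear operators on mean-free L²(𝕋^d) that preserve the L²-norm (‖T_t f‖_{L²} = ‖f‖_{L²}), and suppose there are s₀ > 0, γ > 0, C ≥ 0 with ‖T_t f‖_{H^{−s₀}} ≤ C e^{−γt} ‖f‖_{H^{s₀}} for all f ∈ H^{s₀}₀, t ≥ 0. Then for any 0 < s < s₀ there exists C' ≥ 0 (namely C' = C^{s/s₀} + 1) such that ‖T_t f‖_{H^{−s}} ≤ C' e^{−(s/(2s₀−s)) γ t} ‖f‖_{H^{s}} for all f ∈ H^{s}₀ and t ≥ 0. -/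
/-! Split `f` at frequency `N`. The high-frequency part has `L²`-norm at most `N^{-s}‖f‖_{H^s}`;
`T_t` preserves it and `‖·‖_{H^{-s}} ≤ ‖·‖_{L²}`. The low-frequency part has
`H^{s₀}`-norm at most `N^{s₀-s}‖f‖_{H^s}`, so the mixing bound and interpolation between
`H^{-s₀}` and `L²` give `(C e^{-γt} N^{s₀-s})^{s/s₀}‖f‖_{H^s}`. The choice
`N = e^{γt/(2s₀-s)}` makes both bounds decay like `e^{-sγt/(2s₀-s)}`. -/

/-- Euclidean norm of a frequency `k ∈ ℤ^d`. -/
noncomputable def knorm {d : ℕ} (k : Fin d → ℤ) : ℝ :=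
  Real.sqrt (∑ i, ((k i : ℝ)) ^ 2)

/-- Squared Sobolev norm `‖f‖²_{H^s} = Σ_{k ≠ 0} |f̂_k|² ‖k‖^{2s}`. -/
noncomputable def sobSq {d : ℕ} (s : ℝ) (a : (Fin d → ℤ) → ℂ) : ℝ :=
  ∑' k : Fin d → ℤ, if k = 0 then 0 else ‖a k‖ ^ 2 * knorm k ^ (2 * s)

/-- Membership in `H^s` (mean-free): summability of the defining series. -/
def MemSob {d : ℕ} (s : ℝ) (a : (Fin d → ℤ) → ℂ) : Prop :=
  Summable (fun k : Fin d → ℤ => if k = 0 then 0 else ‖a k‖ ^ 2 * knorm k ^ (2 * s))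

/-- Sobolev norm `‖f‖_{H^s}`. -/
noncomputable def sobNorm {d : ℕ} (s : ℝ) (a : (Fin d → ℤ) → ℂ) : ℝ :=
  Real.sqrt (sobSq s a)

open Real

section

variable {d : ℕ}

noncomputable def sobTerm (s : ℝ) (a : (Fin d → ℤ) → ℂ) (k : Fin d → ℤ) : ℝ :=
  if k = 0 then 0 else ‖a k‖ ^ 2 * knorm k ^ (2 * s)

theorem sobSq_eq_tsum (s : ℝ) (a : (Fin d → ℤ) → ℂ) : sobSq s a = ∑' k, sobTerm s a k := rfl

theorem memSob_iff_summable {s : ℝ} {a : (Fin d → ℤ) → ℂ} :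
    MemSob s a ↔ Summable (sobTerm s a) := Iff.rfl

@[simp]
theorem knorm_zero : knorm (0 : Fin d → ℤ) = 0 := by
  simp [knorm]

theorem one_le_knorm {k : Fin d → ℤ} (hk : k ≠ 0) : 1 ≤ knorm k := by
  obtain ⟨i, hi⟩ := Function.ne_iff.mp hk
  have hi : (1 : ℝ) ≤ (k i : ℝ) ^ 2 := by
    rw [← sq_abs]
    exact one_le_pow₀ (by exact_mod_cast Int.one_le_abs hi)
  exact one_le_sqrt.mpr <| hi.trans <|
    Finset.single_le_sum (f := fun j => (k j : ℝ) ^ 2) (fun j _ => sq_nonneg _) (Finset.mem_univ i)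

theorem knorm_pos {k : Fin d → ℤ} (hk : k ≠ 0) : 0 < knorm k :=
  one_pos.trans_le (one_le_knorm hk)

theorem sobTerm_nonneg (s : ℝ) (a : (Fin d → ℤ) → ℂ) (k : Fin d → ℤ) : 0 ≤ sobTerm s a k := by
  unfold sobTerm
  split_ifs with hk
  · exact le_rfl
  · exact mul_nonneg (sq_nonneg _) (rpow_nonneg (knorm_pos hk).le _)

theorem sobTerm_eq_rpow_mul (s s' : ℝ) (a : (Fin d → ℤ) → ℂ) {k : Fin d → ℤ} (hk : k ≠ 0) :
    sobTerm s' a k = knorm k ^ (2 * (s' - s)) * sobTerm s a k := by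
  simp only [sobTerm, if_neg hk]
  rw [mul_left_comm, ← rpow_add (knorm_pos hk)]
  ring_nf

theorem sobTerm_mono {s s' : ℝ} (h : s ≤ s') (a : (Fin d → ℤ) → ℂ) (k : Fin d → ℤ) :
    sobTerm s a k ≤ sobTerm s' a k := by
  by_cases hk : k = 0
  · simp [sobTerm, hk]
  rw [sobTerm_eq_rpow_mul s s' a hk]
  exact le_mul_of_one_le_left (sobTerm_nonneg s a k)
    (one_le_rpow (one_le_knorm hk) (by linarith))

theorem sobNorm_le_of_sobTerm_le {s s' c : ℝ} {a b : (Fin d → ℤ) → ℂ} (hc : 0 ≤ c)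
    (hb : MemSob s' b) (h : ∀ k, sobTerm s a k ≤ c ^ 2 * sobTerm s' b k) :
    MemSob s a ∧ sobNorm s a ≤ c * sobNorm s' b := by
  have hcb : Summable fun k => c ^ 2 * sobTerm s' b k := hb.mul_left _
  have ha : Summable (sobTerm s a) := .of_nonneg_of_le (sobTerm_nonneg s a) h hcb
  refine ⟨ha, ?_⟩
  calc sobNorm s a ≤ √(c ^ 2 * sobSq s' b) := by
        rw [sobNorm, sobSq_eq_tsum, sobSq_eq_tsum, ← tsum_mul_left]
        exact sqrt_le_sqrt (ha.tsum_le_tsum h hcb)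
    _ = c * sobNorm s' b := by rw [sqrt_mul (sq_nonneg c), sqrt_sq hc, sobNorm]

theorem sobNorm_nonneg (s : ℝ) (a : (Fin d → ℤ) → ℂ) : 0 ≤ sobNorm s a := sqrt_nonneg _

theorem MemSob.mono {s s' : ℝ} {a : (Fin d → ℤ) → ℂ} (h : s ≤ s') (ha : MemSob s' a) :
    MemSob s a :=
  (sobNorm_le_of_sobTerm_le zero_le_one ha fun k => by simpa using sobTerm_mono h a k).1

theorem sobNorm_mono {s s' : ℝ} {a : (Fin d → ℤ) → ℂ} (h : s ≤ s') (ha : MemSob s' a) :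
    sobNorm s a ≤ sobNorm s' a := by
  simpa using (sobNorm_le_of_sobTerm_le zero_le_one ha fun k => by
    simpa using sobTerm_mono h a k).2

theorem sqrt_sobTerm_add_le (s : ℝ) (f g : (Fin d → ℤ) → ℂ) (k : Fin d → ℤ) :
    √(sobTerm s (f + g) k) ≤ √(sobTerm s f k) + √(sobTerm s g k) := by
  by_cases hk : k = 0
  · simp [sobTerm, hk]
  simp only [sobTerm, if_neg hk, Pi.add_apply, sqrt_mul (sq_nonneg _), sqrt_sq (norm_nonneg _),
    ← add_mul]
  gcongr
  exact norm_add_le _ _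

theorem sobNorm_add_le {s : ℝ} {f g : (Fin d → ℤ) → ℂ} (hf : MemSob s f) (hg : MemSob s g) :
    sobNorm s (f + g) ≤ sobNorm s f + sobNorm s g := by
  have hsq {a : (Fin d → ℤ) → ℂ} (k) : √(sobTerm s a k) ^ 2 = sobTerm s a k :=
    sq_sqrt (sobTerm_nonneg s a k)
  obtain ⟨hsum, hle⟩ := Real.Lp_add_le_tsum_of_nonneg one_le_two
    (f := fun k => √(sobTerm s f k)) (g := fun k => √(sobTerm s g k))
    (fun _ => sqrt_nonneg _) (fun _ => sqrt_nonneg _)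
    (by simpa only [rpow_two, hsq] using memSob_iff_summable.mp hf)
    (by simpa only [rpow_two, hsq] using memSob_iff_summable.mp hg)
  simp only [rpow_two, hsq, ← sqrt_eq_rpow] at hsum hle
  have hterm (k) : sobTerm s (f + g) k ≤ (√(sobTerm s f k) + √(sobTerm s g k)) ^ 2 := by
    rw [← hsq k]
    exact pow_le_pow_left₀ (sqrt_nonneg _) (sqrt_sobTerm_add_le s f g k) 2
  calc sobNorm s (f + g) ≤ √(∑' k, (√(sobTerm s f k) + √(sobTerm s g k)) ^ 2) :=
        sqrt_le_sqrt <| Summable.tsum_le_tsum hterm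
          (.of_nonneg_of_le (sobTerm_nonneg s _) hterm hsum) hsum
    _ ≤ sobNorm s f + sobNorm s g := hle

theorem tsum_rpow_mul_rpow_le {ι : Type*} {x y : ι → ℝ} (hx : ∀ i, 0 ≤ x i) (hy : ∀ i, 0 ≤ y i)
    (hxs : Summable x) (hys : Summable y) {θ : ℝ} (hθ₀ : 0 < θ) (hθ₁ : θ < 1) :
    ∑' i, x i ^ θ * y i ^ (1 - θ) ≤ (∑' i, x i) ^ θ * (∑' i, y i) ^ (1 - θ) := by
  have hθ' : 0 < 1 - θ := sub_pos.mpr hθ₁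
  have hpow {z : ℝ} (hz : 0 ≤ z) {e : ℝ} (he : 0 < e) : (z ^ e) ^ e⁻¹ = z := by
    rw [← rpow_mul hz, mul_inv_cancel₀ he.ne', rpow_one]
  have := inner_le_Lp_mul_Lq_tsum_of_nonneg (HolderConjugate.inv_one_sub_inv hθ₀ hθ₁)
    (fun i => rpow_nonneg (hx i) θ) (fun i => rpow_nonneg (hy i) (1 - θ))
    (by simpa only [hpow (hx _) hθ₀] using hxs) (by simpa only [hpow (hy _) hθ'] using hys)
  simpa only [hpow (hx _) hθ₀, hpow (hy _) hθ', one_div, inv_inv] using this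

theorem sobTerm_interp (s₁ s₂ : ℝ) {θ : ℝ} (hθ : θ ≠ 0)
    (a : (Fin d → ℤ) → ℂ) (k : Fin d → ℤ) :
    sobTerm (θ * s₁ + (1 - θ) * s₂) a k = sobTerm s₁ a k ^ θ * sobTerm s₂ a k ^ (1 - θ) := by
  by_cases hk : k = 0
  · simp [sobTerm, hk, zero_rpow hθ]
  have hN := knorm_pos hk
  have hx : 0 ≤ ‖a k‖ ^ 2 := sq_nonneg _
  simp only [sobTerm, if_neg hk]
  rw [mul_rpow hx (rpow_nonneg hN.le _), mul_rpow hx (rpow_nonneg hN.le _), ← rpow_mul hN.le,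
    ← rpow_mul hN.le, mul_mul_mul_comm, ← rpow_add' hx (by simp), ← rpow_add hN,
    add_sub_cancel, rpow_one]
  ring_nf

theorem sobNorm_interp {s₁ s₂ θ : ℝ} (hθ₀ : 0 < θ) (hθ₁ : θ < 1) {a : (Fin d → ℤ) → ℂ}
    (h₁ : MemSob s₁ a) (h₂ : MemSob s₂ a) :
    sobNorm (θ * s₁ + (1 - θ) * s₂) a ≤ sobNorm s₁ a ^ θ * sobNorm s₂ a ^ (1 - θ) := by
  have hsqrt_rpow {z : ℝ} (hz : 0 ≤ z) (e : ℝ) : √(z ^ e) = √z ^ e := by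
    rw [sqrt_eq_rpow, sqrt_eq_rpow, ← rpow_mul hz, ← rpow_mul hz, mul_comm]
  have hnn := sobTerm_nonneg (d := d)
  have hsq {s : ℝ} : 0 ≤ sobSq s a := tsum_nonneg (hnn s a)
  calc sobNorm (θ * s₁ + (1 - θ) * s₂) a
      ≤ √(sobSq s₁ a ^ θ * sobSq s₂ a ^ (1 - θ)) := by
        rw [sobNorm, sobSq_eq_tsum, tsum_congr (sobTerm_interp s₁ s₂ hθ₀.ne' a)]
        exact sqrt_le_sqrt (tsum_rpow_mul_rpow_le (hnn _ a) (hnn _ a) h₁ h₂ hθ₀ hθ₁)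
    _ = sobNorm s₁ a ^ θ * sobNorm s₂ a ^ (1 - θ) := by
        rw [sqrt_mul (rpow_nonneg hsq _), hsqrt_rpow hsq, hsqrt_rpow hsq, sobNorm, sobNorm]

noncomputable def lowPass (N : ℝ) (f : (Fin d → ℤ) → ℂ) : (Fin d → ℤ) → ℂ :=
  fun k => if knorm k ≤ N then f k else 0

noncomputable def highPass (N : ℝ) (f : (Fin d → ℤ) → ℂ) : (Fin d → ℤ) → ℂ :=
  fun k => if knorm k ≤ N then 0 else f k

theorem lowPass_add_highPass (N : ℝ) (f : (Fin d → ℤ) → ℂ) :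
    lowPass N f + highPass N f = f := by
  funext k
  simp only [lowPass, highPass, Pi.add_apply]
  split_ifs <;> simp

theorem lowPass_apply_zero {N : ℝ} (hN : 0 ≤ N) (f : (Fin d → ℤ) → ℂ) :
    lowPass N f 0 = f 0 := by
  simp [lowPass, hN]

theorem highPass_apply_zero {N : ℝ} (hN : 0 ≤ N) (f : (Fin d → ℤ) → ℂ) :
    highPass N f 0 = 0 := by
  simp [highPass, hN]

theorem sobTerm_lowPass (s N : ℝ) (f : (Fin d → ℤ) → ℂ) (k : Fin d → ℤ) :
    sobTerm s (lowPass N f) k = if knorm k ≤ N then sobTerm s f k else 0 := by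
  unfold sobTerm lowPass
  split_ifs <;> simp

theorem sobTerm_highPass (s N : ℝ) (f : (Fin d → ℤ) → ℂ) (k : Fin d → ℤ) :
    sobTerm s (highPass N f) k = if knorm k ≤ N then 0 else sobTerm s f k := by
  unfold sobTerm highPass
  split_ifs <;> simp

theorem sobNorm_lowPass_le {s s' N : ℝ} (h : s' ≤ s) {f : (Fin d → ℤ) → ℂ} (hf : MemSob s f) :
    MemSob s' (lowPass N f) ∧ sobNorm s' (lowPass N f) ≤ sobNorm s f := by
  simpa using sobNorm_le_of_sobTerm_le zero_le_one hf fun k => by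
    rw [sobTerm_lowPass, one_pow, one_mul]
    split_ifs
    · exact sobTerm_mono h f k
    · exact sobTerm_nonneg s f k

theorem sobNorm_lowPass_le_rpow_mul {s s' N : ℝ} (hN : 0 ≤ N) (h : s ≤ s')
    {f : (Fin d → ℤ) → ℂ} (hf : MemSob s f) :
    MemSob s' (lowPass N f) ∧ sobNorm s' (lowPass N f) ≤ N ^ (s' - s) * sobNorm s f := by
  refine sobNorm_le_of_sobTerm_le (rpow_nonneg hN _) hf fun k => ?_
  rw [sobTerm_lowPass, ← rpow_mul_natCast hN, Nat.cast_ofNat, mul_comm (s' - s)]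
  split_ifs with hkN
  · by_cases hk : k = 0
    · simp [sobTerm, hk]
    rw [sobTerm_eq_rpow_mul s s' f hk]
    exact mul_le_mul_of_nonneg_right (rpow_le_rpow (knorm_pos hk).le hkN (by linarith))
      (sobTerm_nonneg s f k)
  · exact mul_nonneg (rpow_nonneg hN _) (sobTerm_nonneg s f k)

theorem sobNorm_highPass_le_rpow_mul {s s' N : ℝ} (hN : 0 < N) (h : s' ≤ s)
    {f : (Fin d → ℤ) → ℂ} (hf : MemSob s f) :
    MemSob s' (highPass N f) ∧ sobNorm s' (highPass N f) ≤ N ^ (s' - s) * sobNorm s f := by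
  refine sobNorm_le_of_sobTerm_le (rpow_nonneg hN.le _) hf fun k => ?_
  rw [sobTerm_highPass, ← rpow_mul_natCast hN.le, Nat.cast_ofNat, mul_comm (s' - s)]
  split_ifs with hkN
  · exact mul_nonneg (rpow_nonneg hN.le _) (sobTerm_nonneg s f k)
  · have hk : k ≠ 0 := by
      rintro rfl
      simp [hN.le] at hkN
    rw [sobTerm_eq_rpow_mul s s' f hk]
    exact mul_le_mul_of_nonneg_right (rpow_le_rpow_of_nonpos hN (not_le.mp hkN).le (by linarith))
      (sobTerm_nonneg s f k)

theorem sobNorm_neg_le_of_mixing (S : ((Fin d → ℤ) → ℂ) →ₗ[ℂ] ((Fin d → ℤ) → ℂ))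
    {s s₀ K N : ℝ} (hs : 0 < s) (hss₀ : s < s₀) (hK : 0 ≤ K) (hN : 0 < N)
    (hL2 : ∀ f, MemSob 0 f → MemSob 0 (S f))
    (hpres : ∀ f, f 0 = 0 → MemSob 0 f → sobNorm 0 (S f) = sobNorm 0 f)
    (hmix : ∀ f, f 0 = 0 → MemSob s₀ f → sobNorm (-s₀) (S f) ≤ K * sobNorm s₀ f)
    {f : (Fin d → ℤ) → ℂ} (hf0 : f 0 = 0) (hf : MemSob s f) :
    sobNorm (-s) (S f) ≤ ((K * N ^ (s₀ - s)) ^ (s / s₀) + N ^ (-s)) * sobNorm s f := by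
  set θ := s / s₀
  have hs₀ : 0 < s₀ := hs.trans hss₀
  have hθ₀ : 0 < θ := div_pos hs hs₀
  have hθ₁ : θ < 1 := (div_lt_one hs₀).mpr hss₀
  set A := sobNorm s f
  have hA := sobNorm_nonneg s f
  obtain ⟨hlow₀, hlow₀_le⟩ := sobNorm_lowPass_le_rpow_mul (s' := s₀) hN.le hss₀.le hf
  obtain ⟨hlowL2, hlowL2_le⟩ := sobNorm_lowPass_le (s' := 0) (N := N) hs.le hf
  obtain ⟨hhighL2, hhighL2_le⟩ := sobNorm_highPass_le_rpow_mul (s' := 0) hN hs.le hf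
  have hlow : sobNorm (-s) (S (lowPass N f)) ≤ (K * N ^ (s₀ - s)) ^ θ * A := by
    have h0 : lowPass N f 0 = 0 := by rw [lowPass_apply_zero hN.le, hf0]
    have hS := hL2 _ hlowL2
    have hθs : θ * -s₀ + (1 - θ) * 0 = -s := by simp only [θ]; field_simp; ring
    calc sobNorm (-s) (S (lowPass N f))
        ≤ sobNorm (-s₀) (S (lowPass N f)) ^ θ * sobNorm 0 (S (lowPass N f)) ^ (1 - θ) := by
          simpa only [hθs] using sobNorm_interp hθ₀ hθ₁ (hS.mono (neg_nonpos.mpr hs₀.le)) hS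
      _ ≤ (K * N ^ (s₀ - s) * A) ^ θ * A ^ (1 - θ) := by
          have hH : sobNorm (-s₀) (S (lowPass N f)) ≤ K * N ^ (s₀ - s) * A :=
            calc sobNorm (-s₀) (S (lowPass N f)) ≤ K * sobNorm s₀ (lowPass N f) :=
                  hmix _ h0 hlow₀
              _ ≤ K * N ^ (s₀ - s) * A := by rw [mul_assoc]; gcongr
          have hL : sobNorm 0 (S (lowPass N f)) ≤ A := (hpres _ h0 hlowL2).trans_le hlowL2_le
          exact mul_le_mul (rpow_le_rpow (sobNorm_nonneg _ _) hH hθ₀.le)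
            (rpow_le_rpow (sobNorm_nonneg _ _) hL (by linarith))
            (rpow_nonneg (sobNorm_nonneg _ _) _) (rpow_nonneg (by positivity) _)
      _ = (K * N ^ (s₀ - s)) ^ θ * A := by
          rw [mul_rpow (by positivity) hA, mul_assoc, ← rpow_add' hA (by simp), add_sub_cancel,
            rpow_one]
  have hhigh : sobNorm (-s) (S (highPass N f)) ≤ N ^ (-s) * A := by
    have h0 := highPass_apply_zero hN.le f
    calc sobNorm (-s) (S (highPass N f)) ≤ sobNorm 0 (S (highPass N f)) :=
          sobNorm_mono (by linarith) (hL2 _ hhighL2)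
      _ = sobNorm 0 (highPass N f) := hpres _ h0 hhighL2
      _ ≤ N ^ (-s) * A := by simpa using hhighL2_le
  calc sobNorm (-s) (S f) = sobNorm (-s) (S (lowPass N f) + S (highPass N f)) := by
        rw [← map_add, lowPass_add_highPass]
    _ ≤ sobNorm (-s) (S (lowPass N f)) + sobNorm (-s) (S (highPass N f)) :=
        sobNorm_add_le ((hL2 _ hlowL2).mono (by linarith)) ((hL2 _ hhighL2).mono (by linarith))
    _ ≤ _ := by rw [add_mul]; exact add_le_add hlow hhigh

end

theorem stmt10_general {d : ℕ} (T : ℝ → ((Fin d → ℤ) → ℂ) →ₗ[ℂ] ((Fin d → ℤ) → ℂ))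
    (s₀ γ C : ℝ) (hC : 0 ≤ C)
    (hTL2 : ∀ t, 0 ≤ t → ∀ f : (Fin d → ℤ) → ℂ, MemSob 0 f → MemSob 0 (T t f))
    (hpres : ∀ t, 0 ≤ t → ∀ f : (Fin d → ℤ) → ℂ, f 0 = 0 → MemSob 0 f →
      sobNorm 0 (T t f) = sobNorm 0 f)
    (hmix : ∀ t, 0 ≤ t → ∀ f : (Fin d → ℤ) → ℂ, f 0 = 0 → MemSob s₀ f →
      sobNorm (-s₀) (T t f) ≤ C * Real.exp (-γ * t) * sobNorm s₀ f) :
    ∀ s, 0 < s → s < s₀ → ∀ t, 0 ≤ t → ∀ f : (Fin d → ℤ) → ℂ, f 0 = 0 → MemSob s f →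
      sobNorm (-s) (T t f) ≤
        (C ^ (s / s₀) + 1) * Real.exp (-(s / (2 * s₀ - s)) * γ * t) * sobNorm s f := by
  intro s hs hss₀ t ht f hf0 hf
  set N := exp (γ * t / (2 * s₀ - s))
  set E := exp (-(s / (2 * s₀ - s)) * γ * t)
  have hs₀ : s₀ ≠ 0 := by linarith
  have hden : 2 * s₀ - s ≠ 0 := by linarith
  have hlow : (C * exp (-γ * t) * N ^ (s₀ - s)) ^ (s / s₀) = C ^ (s / s₀) * E := by
    rw [mul_assoc, mul_rpow hC (by positivity), ← exp_mul, ← exp_add, ← exp_mul]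
    congr 2
    field_simp
    ring
  have hhigh : N ^ (-s) = E := by
    rw [← exp_mul]
    congr 1
    field_simp
  have hbound := sobNorm_neg_le_of_mixing (T t) hs hss₀ (mul_nonneg hC (exp_pos _).le) (exp_pos _)
    (hTL2 t ht) (hpres t ht) (hmix t ht) hf0 hf (N := N)
  rwa [hlow, hhigh, ← add_one_mul] at hbound

/-- Mixing rate propagation, case `0 < s < s₀`: if the linear operators `T_t` preserve
mean-freeness and the `L²`-norm and satisfy
`‖T_t f‖_{H^{−s₀}} ≤ C e^{−γt}‖f‖_{H^{s₀}}`, then for `0 < s < s₀`, with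
`C' = C^{s/s₀} + 1`, they satisfy
`‖T_t f‖_{H^{−s}} ≤ C' e^{−(s/(2s₀−s))γt}‖f‖_{H^{s}}`. -/
theorem stmt10 {d : ℕ} (T : ℝ → ((Fin d → ℤ) → ℂ) →ₗ[ℂ] ((Fin d → ℤ) → ℂ))
    (s₀ γ C : ℝ) (hs₀ : 0 < s₀) (hγ : 0 < γ) (hC : 0 ≤ C)
    (hT0 : ∀ t, 0 ≤ t → ∀ f : (Fin d → ℤ) → ℂ, f 0 = 0 → (T t f) 0 = 0)
    (hTL2 : ∀ t, 0 ≤ t → ∀ f : (Fin d → ℤ) → ℂ, MemSob 0 f → MemSob 0 (T t f))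
    (hpres : ∀ t, 0 ≤ t → ∀ f : (Fin d → ℤ) → ℂ, f 0 = 0 → MemSob 0 f →
      sobNorm 0 (T t f) = sobNorm 0 f)
    (hmix : ∀ t, 0 ≤ t → ∀ f : (Fin d → ℤ) → ℂ, f 0 = 0 → MemSob s₀ f →
      sobNorm (-s₀) (T t f) ≤ C * Real.exp (-γ * t) * sobNorm s₀ f) :
    ∀ s, 0 < s → s < s₀ → ∀ t, 0 ≤ t → ∀ f : (Fin d → ℤ) → ℂ, f 0 = 0 → MemSob s f →
      sobNorm (-s) (T t f) ≤
        (C ^ (s / s₀) + 1) * Real.exp (-(s / (2 * s₀ - s)) * γ * t) * sobNorm s f :=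
  stmt10_general T s₀ γ C hC hTL2 hpres hmix
end

section
/- Connectivity of the adjacency graph on ℤ² \ {0}: define two modes (k₁,l₁), (k₂,l₂) ∈ ℤ² \ {0} to be adjacent if either (k₁ = k₂ ≠ 0 and l₁ = l₂ ± 1) or (k₁ = k₂ ± 1 and l₁ = l₂ ≠ 0). Then the graph with vertex set ℤ² \ {0} and edges between adjacent modes is connected. -/
/-!
Every column `{k} × ℤ` with `k ≠ 0` and every row `ℤ × {l}` with `l ≠ 0` is a path in the
graph, being the image of the Hasse diagram of `ℤ`. Row `1` meets every nonzero column and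
column `1` meets every nonzero row, so every mode is joined to `(1, 1)`.
-/

/-- Two modes of `ℤ² \ {0}` are adjacent if they share a nonzero coordinate and the
other coordinate differs by one. -/
def ModeAdj (p q : ℤ × ℤ) : Prop :=
  (p.1 = q.1 ∧ p.1 ≠ 0 ∧ (p.2 = q.2 + 1 ∨ p.2 = q.2 - 1)) ∨
  (p.2 = q.2 ∧ p.2 ≠ 0 ∧ (p.1 = q.1 + 1 ∨ p.1 = q.1 - 1))

open SimpleGraph

theorem SimpleGraph.reachable_of_adj_add_one {V : Type*} {G : SimpleGraph V} {f : ℤ → V}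
    (hf : ∀ i, G.Adj (f i) (f (i + 1))) (a b : ℤ) : G.Reachable (f a) (f b) := by
  let φ : hasse ℤ →g G :=
    ⟨f, by rintro i j (h | h) <;> rw [Order.covBy_iff_add_one_eq] at h <;> subst h
           exacts [hf i, (hf j).symm]⟩
  exact (hasse_preconnected_of_succ ℤ a b).map φ

def modeGraph : SimpleGraph {p : ℤ × ℤ // p ≠ 0} :=
  fromRel fun p q => ModeAdj p.1 q.1

theorem ModeAdj.ne {p q : ℤ × ℤ} (h : ModeAdj p q) : p ≠ q := by
  rintro rfl
  rcases h with ⟨-, -, h⟩ | ⟨-, -, h⟩ <;> omega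

theorem modeGraph_adj_of_modeAdj {p q : {p : ℤ × ℤ // p ≠ 0}} (h : ModeAdj p.1 q.1) :
    modeGraph.Adj p q :=
  (fromRel_adj _ p q).2 ⟨fun hpq => h.ne (congrArg Subtype.val hpq), Or.inl h⟩

theorem modeGraph_reachable_of_fst_eq {p q : {p : ℤ × ℤ // p ≠ 0}} (hpq : p.1.1 = q.1.1)
    (hp : p.1.1 ≠ 0) : modeGraph.Reachable p q := by
  let column : ℤ → {p : ℤ × ℤ // p ≠ 0} := fun l =>
    ⟨(p.1.1, l), fun h => hp (congrArg Prod.fst h)⟩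
  have hq : column q.1.2 = q := Subtype.ext (Prod.ext hpq rfl)
  rw [← hq]
  exact reachable_of_adj_add_one (f := column)
    (fun l => modeGraph_adj_of_modeAdj (Or.inl ⟨rfl, hp, Or.inr (by simp [column])⟩))
    p.1.2 q.1.2

theorem modeGraph_reachable_of_snd_eq {p q : {p : ℤ × ℤ // p ≠ 0}} (hpq : p.1.2 = q.1.2)
    (hp : p.1.2 ≠ 0) : modeGraph.Reachable p q := by
  let row : ℤ → {p : ℤ × ℤ // p ≠ 0} := fun k =>
    ⟨(k, p.1.2), fun h => hp (congrArg Prod.snd h)⟩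
  have hq : row q.1.1 = q := Subtype.ext (Prod.ext rfl hpq)
  rw [← hq]
  exact reachable_of_adj_add_one (f := row)
    (fun k => modeGraph_adj_of_modeAdj (Or.inr ⟨rfl, hp, Or.inr (by simp [row])⟩))
    p.1.1 q.1.1

/-- The graph with vertex set `ℤ² \ {0}` and edges between adjacent modes is
connected. -/
theorem stmt13 :
    (SimpleGraph.fromRel
      (fun p q : {p : ℤ × ℤ // p ≠ 0} => ModeAdj p.1 q.1)).Connected := by
  have h11 : ((1, 1) : ℤ × ℤ) ≠ 0 := by simp
  refine (connected_iff_exists_forall_reachable _).2 ⟨⟨(1, 1), h11⟩, ?_⟩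
  rintro ⟨⟨k, l⟩, hkl⟩
  rcases eq_or_ne k 0 with rfl | hk
  · have hl : l ≠ 0 := by rintro rfl; exact hkl rfl
    have h1l : ((1, l) : ℤ × ℤ) ≠ 0 := by simp
    have along_column : modeGraph.Reachable ⟨(1, 1), h11⟩ ⟨(1, l), h1l⟩ :=
      modeGraph_reachable_of_fst_eq rfl one_ne_zero
    exact along_column.trans (modeGraph_reachable_of_snd_eq rfl hl)
  · have hk1 : ((k, 1) : ℤ × ℤ) ≠ 0 := by simp
    have along_row : modeGraph.Reachable ⟨(1, 1), h11⟩ ⟨(k, 1), hk1⟩ :=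
      modeGraph_reachable_of_snd_eq rfl one_ne_zero
    exact along_row.trans (modeGraph_reachable_of_fst_eq rfl hk)
end
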